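/- Let k be a positive integer and let G be a 50k-connected graph that contains no independent set of size k. Then G contains k pairwise vertex-disjoint triangles. -/

import Mathlib

universe u

variable {V : Type u}

/-- A graph is `k`-connected if it has more than `k` vertices and deleting any
set of fewer than `k` vertices leaves a connected graph. -/
def KConnected (G : SimpleGraph V) (k : ℕ) : Prop :=
  k < Nat.card V ∧ ∀ X : Set V, X.ncard < k → (G.induce Xᶜ).Connected

/-- A graph is bipartite if it is 2-colorable. -/
def Bipartite (G : SimpleGraph V) : Prop := G.Colorable 2

/-- `X` is an odd cycle cover of `G` if `G - X` is bipartite. -/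
def IsOddCycleCover (G : SimpleGraph V) (X : Set V) : Prop :=
  Bipartite (G.induce Xᶜ)

/-- `X` is a minimum odd cycle cover of `G`. -/
def IsMinOddCycleCover (G : SimpleGraph V) (X : Set V) : Prop :=
  IsOddCycleCover G X ∧ ∀ Y : Set V, IsOddCycleCover G Y → X.ncard ≤ Y.ncard

/-- The odd cycle cover `X` induces the partition `(A, B)`:
`(A \ X, B \ X)` is a bipartition of `G - X`, and a vertex of `X` lies in `A`
(resp. `B`) if it has more neighbours in `B \ X` than in `A \ X`
(resp. more neighbours in `A \ X` than in `B \ X`). -/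
def InducesPartition (G : SimpleGraph V) (X A B : Set V) : Prop :=
  (∀ u v, G.Adj u v → u ∉ X → v ∉ X → ¬(u ∈ A ∧ v ∈ A) ∧ ¬(u ∈ B ∧ v ∈ B)) ∧
  (∀ x ∈ X,
    ({y | G.Adj x y ∧ y ∈ A \ X}.ncard < {y | G.Adj x y ∧ y ∈ B \ X}.ncard → x ∈ A) ∧
    ({y | G.Adj x y ∧ y ∈ B \ X}.ncard < {y | G.Adj x y ∧ y ∈ A \ X}.ncard → x ∈ B))

/-- `(A, B)` is a nice partition of `G`. -/
def IsNicePartition (G : SimpleGraph V) (A B : Set V) : Prop :=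
  A ∪ B = Set.univ ∧ Disjoint A B ∧
    ∃ X : Set V, IsMinOddCycleCover G X ∧ InducesPartition G X A B

/-- The graph `G_{A,B} = G[A] ∪ G[B]`: edges of `G` with both ends in `A` or both in `B`. -/
def sideGraph (G : SimpleGraph V) (A B : Set V) : SimpleGraph V where
  Adj u v := G.Adj u v ∧ ((u ∈ A ∧ v ∈ A) ∨ (u ∈ B ∧ v ∈ B))
  symm := by
    constructor
    intro u v h
    exact ⟨h.1.symm, by tauto⟩
  loopless := by
    constructor
    intro v h
    exact G.loopless.irrefl v h.1

/-- A parity breaking matching for `(S, I)` with respect to `(A, B)`, where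
`S = {{s i, t i} : i}`: a matching `{m i : i ∈ I}` of edges of `G_{A,B}` such that
`m i` contains no vertex of `{s j, t j}` for `j ≠ i`. -/
def ParityBreakingMatching (G : SimpleGraph V) (A B : Set V) {k : ℕ}
    (s t : Fin k → V) (I : Finset (Fin k)) (m : Fin k → Sym2 V) : Prop :=
  (∀ i ∈ I, m i ∈ (sideGraph G A B).edgeSet) ∧
  (∀ i ∈ I, ∀ j ∈ I, i ≠ j → ∀ x ∈ m i, x ∉ m j) ∧
  (∀ i ∈ I, ∀ j : Fin k, j ≠ i → s j ∉ m i ∧ t j ∉ m i)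

/-- `P` is a family of pairwise vertex-disjoint paths, `P i` connecting `s i` and `t i`. -/
def DisjointPaths {k : ℕ} (G : SimpleGraph V) (s t : Fin k → V)
    (P : ∀ i, G.Walk (s i) (t i)) : Prop :=
  (∀ i, (P i).IsPath) ∧ ∀ i j, i ≠ j → ∀ x ∈ (P i).support, x ∉ (P j).support

/-- `G` is `k`-linked. -/
def KLinked (G : SimpleGraph V) (k : ℕ) : Prop :=
  ∀ s t : Fin k → V, Function.Injective (Sum.elim s t) →
    ∃ P : ∀ i, G.Walk (s i) (t i), DisjointPaths G s t P

/-- `G` is parity-`k`-linked. -/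
def ParityKLinked (G : SimpleGraph V) (k : ℕ) : Prop :=
  ∀ s t : Fin k → V, Function.Injective (Sum.elim s t) →
    ∀ p : Fin k → Bool,
      ∃ P : ∀ i, G.Walk (s i) (t i), DisjointPaths G s t P ∧
        ∀ i, (Odd (P i).length ↔ p i = true)

/-- A set of vertices is independent if no edge joins two of its vertices. -/
def IsIndepSet' (G : SimpleGraph V) (s : Set V) : Prop :=
  ∀ x ∈ s, ∀ y ∈ s, ¬ G.Adj x y

/-- `G` is parity-`k`-linked restricted to independent sets. -/
def ParityKLinkedIndep (G : SimpleGraph V) (k : ℕ) : Prop :=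
  ∀ s t : Fin k → V, Function.Injective (Sum.elim s t) →
    IsIndepSet' G (Set.range s ∪ Set.range t) →
    ∀ p : Fin k → Bool,
      ∃ P : ∀ i, G.Walk (s i) (t i), DisjointPaths G s t P ∧
        ∀ i, (Odd (P i).length ↔ p i = true)

/-- `G` contains `k` pairwise vertex-disjoint odd `S`-cycles. -/
def HasDisjointOddSCycles (G : SimpleGraph V) (S : Set V) (k : ℕ) : Prop :=
  ∃ (v : Fin k → V) (c : ∀ i, G.Walk (v i) (v i)),
    (∀ i, (c i).IsCycle ∧ Odd (c i).length ∧ ∃ x ∈ S, x ∈ (c i).support) ∧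
    ∀ i j, i ≠ j → ∀ x ∈ (c i).support, x ∉ (c j).support

/-- `G` contains an odd `S`-cycle. -/
def HasOddSCycle (G : SimpleGraph V) (S : Set V) : Prop :=
  ∃ (v : V) (c : G.Walk v v), c.IsCycle ∧ Odd c.length ∧ ∃ x ∈ S, x ∈ c.support

/-- `G` contains `k` pairwise vertex-disjoint odd cycles. -/
def HasDisjointOddCycles (G : SimpleGraph V) (k : ℕ) : Prop :=
  ∃ (v : Fin k → V) (c : ∀ i, G.Walk (v i) (v i)),
    (∀ i, (c i).IsCycle ∧ Odd (c i).length) ∧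
    ∀ i j, i ≠ j → ∀ x ∈ (c i).support, x ∉ (c j).support

/-- `C` is a vertex cover of `G`. -/
def IsVertexCover (G : SimpleGraph V) (C : Set V) : Prop :=
  ∀ e ∈ G.edgeSet, ∃ v ∈ C, v ∈ e

/-- The vertex cover number `τ(G)`. -/
noncomputable def vcNumber (G : SimpleGraph V) : ℕ :=
  sInf {n | ∃ C : Set V, IsVertexCover G C ∧ C.ncard = n}

/-- `P` is an odd `Z`-path: a path of odd length whose vertex set meets `Z`
exactly in its two end vertices. -/
def IsOddZPath (G : SimpleGraph V) (Z : Set V) {u v : V} (P : G.Walk u v) : Prop :=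
  P.IsPath ∧ Odd P.length ∧ u ∈ Z ∧ v ∈ Z ∧
    ∀ x ∈ P.support, x ∈ Z → x = u ∨ x = v

/-! Greedy. A `50k`-connected graph has minimum degree at least `50k`.
Having found fewer than `k` disjoint triangles, covering at most `3(k - 1)` vertices, pick an
unused vertex `x`: at least `k` of its neighbours are unused, and since there is no independent
set of size `k`, two of them are adjacent, closing a new triangle through `x`. -/

lemma KConnected.le_ncard_neighborSet {G : SimpleGraph V} {k : ℕ} (hG : KConnected G k)
    (v : V) : k ≤ (G.neighborSet v).ncard := by
  by_contra! hlt
  have : Finite V := Nat.finite_of_card_ne_zero (by have := hG.1; omega)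
  have hv : v ∈ (G.neighborSet v)ᶜ := G.notMem_neighborSet_self
  have : Nontrivial ↥(G.neighborSet v)ᶜ := by
    rw [Set.nontrivial_coe_sort, ← Set.one_lt_ncard_iff_nontrivial]
    have := Set.ncard_add_ncard_compl (G.neighborSet v)
    have := hG.1
    omega
  obtain ⟨u, hu⟩ := (hG.2 _ hlt).preconnected.exists_adj_of_nontrivial ⟨v, hv⟩
  exact u.2 hu

lemma exists_adj_of_le_ncard {G : SimpleGraph V} {k : ℕ}
    (hindep : ¬ ∃ s : Set V, s.ncard = k ∧ IsIndepSet' G s) {s : Set V} (hs : k ≤ s.ncard) :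
    ∃ u ∈ s, ∃ w ∈ s, G.Adj u w := by
  by_contra! h
  obtain ⟨t, hts, rfl⟩ := Set.exists_subset_card_eq hs
  exact hindep ⟨t, rfl, fun x hx y hy => h x (hts hx) y (hts hy)⟩

lemma exists_triangle_avoiding [Finite V] [Nonempty V] {G : SimpleGraph V} {k : ℕ}
    (hindep : ¬ ∃ s : Set V, s.ncard = k ∧ IsIndepSet' G s) (S : Set V)
    (hdeg : ∀ v, S.ncard + k ≤ (G.neighborSet v).ncard) :
    ∃ x y z, x ∉ S ∧ y ∉ S ∧ z ∉ S ∧ G.Adj x y ∧ G.Adj y z ∧ G.Adj x z := by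
  have hk : k ≠ 0 := by
    rintro rfl
    exact hindep ⟨∅, Set.ncard_empty V, by simp [IsIndepSet']⟩
  obtain ⟨x, -, hxS⟩ := Set.exists_mem_notMem_of_ncard_lt_ncard (s := S)
    (t := G.neighborSet (Classical.arbitrary V)) (by grind)
  have hN : k ≤ (G.neighborSet x \ S).ncard :=
    (Nat.le_sub_of_add_le' (hdeg x)).trans (Set.le_ncard_sdiff _ _)
  obtain ⟨y, hy, z, hz, hyz⟩ := exists_adj_of_le_ncard hindep hN
  exact ⟨x, y, z, hxS, hy.2, hz.2, hy.1, hyz, hz.1⟩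

def IsTrianglePacking {n : ℕ} (G : SimpleGraph V) (a b c : Fin n → V) : Prop :=
  (∀ i, G.Adj (a i) (b i) ∧ G.Adj (b i) (c i) ∧ G.Adj (a i) (c i)) ∧
    ∀ i j, i ≠ j → ({a i, b i, c i} : Set V) ∩ {a j, b j, c j} = ∅

lemma IsTrianglePacking.snoc {n : ℕ} {G : SimpleGraph V} {a b c : Fin n → V} {x y z : V}
    (h : IsTrianglePacking G a b c) (hxy : G.Adj x y) (hyz : G.Adj y z) (hxz : G.Adj x z)
    (hfresh : ∀ j, ({x, y, z} : Set V) ∩ {a j, b j, c j} = ∅) :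
    IsTrianglePacking G (Fin.snoc a x) (Fin.snoc b y) (Fin.snoc c z) := by
  refine ⟨fun i => ?_, fun i j hij => ?_⟩
  · induction i using Fin.lastCases with
    | last => simpa using ⟨hxy, hyz, hxz⟩
    | cast i => simpa using h.1 i
  · induction i using Fin.lastCases with
    | last =>
      induction j using Fin.lastCases with
      | last => exact absurd rfl hij
      | cast j => simpa using hfresh j
    | cast i =>
      induction j using Fin.lastCases with
      | last => simpa [Set.inter_comm] using hfresh i
      | cast j => simpa using h.2 i j (by simpa using hij)

theorem exists_disjoint_triangles [Finite V] [Nonempty V] {G : SimpleGraph V} {k : ℕ}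
    (hindep : ¬ ∃ s : Set V, s.ncard = k ∧ IsIndepSet' G s)
    (hdeg : ∀ v, 4 * k - 3 ≤ (G.neighborSet v).ncard) :
    ∃ a b c : Fin k → V, IsTrianglePacking G a b c := by
  suffices ∀ n ≤ k, ∃ a b c : Fin n → V, IsTrianglePacking G a b c from this k le_rfl
  intro n
  induction n with
  | zero => exact fun _ => ⟨Fin.elim0, Fin.elim0, Fin.elim0, fun i => i.elim0, fun i => i.elim0⟩
  | succ n ih =>
    intro hn
    obtain ⟨a, b, c, hpack⟩ := ih (by omega)
    set S := Set.range a ∪ Set.range b ∪ Set.range c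
    have hS : S.ncard ≤ 3 * n := by
      have hrange (f : Fin n → V) : (Set.range f).ncard ≤ n := by
        simpa [Nat.card_coe_set_eq] using Finite.card_range_le f
      grind [Set.ncard_union_le]
    obtain ⟨x, y, z, hx, hy, hz, hxy, hyz, hxz⟩ :=
      exists_triangle_avoiding hindep S fun v => by grind
    exact ⟨_, _, _, hpack.snoc hxy hyz hxz fun j => by grind⟩

theorem stmt19_general {V : Type u} (k : ℕ)
    (G : SimpleGraph V) (hconn : KConnected G (50 * k))
    (hindep : ¬ ∃ s : Set V, s.ncard = k ∧ IsIndepSet' G s) :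
    ∃ a b c : Fin k → V,
      (∀ i, G.Adj (a i) (b i) ∧ G.Adj (b i) (c i) ∧ G.Adj (a i) (c i)) ∧
      ∀ i j, i ≠ j → ({a i, b i, c i} : Set V) ∩ {a j, b j, c j} = ∅ := by
  have hcard : 0 < Nat.card V := (Nat.zero_le _).trans_lt hconn.1
  have : Finite V := Nat.finite_of_card_ne_zero hcard.ne'
  have : Nonempty V := (Nat.card_pos_iff.mp hcard).1
  exact exists_disjoint_triangles hindep fun v => by
    have := hconn.le_ncard_neighborSet v
    omega

theorem stmt19 {V : Type u} [Fintype V] (k : ℕ) (hk : 0 < k)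
    (G : SimpleGraph V) (hconn : KConnected G (50 * k))
    (hindep : ¬ ∃ s : Set V, s.ncard = k ∧ IsIndepSet' G s) :
    ∃ a b c : Fin k → V,
      (∀ i, G.Adj (a i) (b i) ∧ G.Adj (b i) (c i) ∧ G.Adj (a i) (c i)) ∧
      ∀ i j, i ≠ j → ({a i, b i, c i} : Set V) ∩ {a j, b j, c j} = ∅ :=
  stmt19_general k G hconn hindep
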